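/- Let X be a connected graph with basepoint x₀, and let g ∈ Cov(X) correspond to the pair (f, ⟦β⟧) with f ∈ Aut(X) and β: x₀ → f(x₀) a path. Define ρ(g): Z₁(X,ℝ) → Z₁(X,ℝ) by ρ(g)(c) = π(c_β) + f_*(c). Then for every path α: x₀ → x, every edge e with s(e) = x, and every t ∈ [0,1], one has ρ(g)(π(c_α + t·e)) = π(c_{β f(α)} + t·f(e)). In other words, the embedding of the maximal abelian cover into Z₁(X,ℝ) is equivariant with respect to the action of Cov(X). -/

import Mathlib

/-- A graph in the sense of Sunada's topological crystallography: a set of vertices,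
a set of edges, source and target maps, and a fixed-point free involution sending
each edge to its inverse. -/
structure SGraph where
  V : Type
  E : Type
  s : E → V
  t : E → V
  inv : E → E
  s_inv : ∀ e, s (inv e) = t e
  t_inv : ∀ e, t (inv e) = s e
  inv_inv : ∀ e, inv (inv e) = e
  inv_ne : ∀ e, inv e ≠ e

namespace SGraph

variable (X : SGraph)

/-- `X.IsPath x y γ` : the word of edges `γ` is a path from `x` to `y` in `X`. -/
inductive IsPath : X.V → X.V → List X.E → Prop
  | nil (x : X.V) : IsPath x x []
  | cons (e : X.E) {y : X.V} {γ : List X.E} (h : IsPath (X.t e) y γ) :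
      IsPath (X.s e) y (e :: γ)

/-- A graph is connected if any two vertices are joined by a path. -/
def Connected : Prop := ∀ x y : X.V, ∃ γ : List X.E, X.IsPath x y γ

/-- An edge is a bridge if there is no path from its target to its source
avoiding both the edge and its inverse. -/
def IsBridge (e : X.E) : Prop :=
  ¬ ∃ γ : List X.E, X.IsPath (X.t e) (X.s e) γ ∧ e ∉ γ ∧ X.inv e ∉ γ

/-- The space `C₁(X,ℝ)` of real 1-chains: formal linear combinations of edges
with `e⁻¹ = -e`, realized as finitely supported functions `c : E → ℝ` with
`c(e⁻¹) = - c(e)`. -/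
noncomputable def C1 : Submodule ℝ (X.E →₀ ℝ) where
  carrier := {c | ∀ e, c (X.inv e) = - c e}
  add_mem' := by
    intro a b ha hb e
    simp only [Finsupp.add_apply, ha e, hb e]
    ring
  zero_mem' := by intro e; simp
  smul_mem' := by
    intro r c hc e
    simp only [Finsupp.smul_apply, hc e, smul_eq_mul]
    ring

/-- The 1-chain associated to a single edge. -/
noncomputable def edgeChain (e : X.E) : ↥X.C1 :=
  ⟨Finsupp.single e 1 - Finsupp.single (X.inv e) 1, by
    intro f
    classical
    have h1 : (e = X.inv f) ↔ (X.inv e = f) := by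
      constructor
      · rintro rfl; exact X.inv_inv f
      · rintro rfl; exact (X.inv_inv e).symm
    have h2 : (X.inv e = X.inv f) ↔ (e = f) := by
      constructor
      · intro h
        have := congrArg X.inv h
        rwa [X.inv_inv, X.inv_inv] at this
      · rintro rfl; rfl
    simp only [Finsupp.sub_apply, Finsupp.single_apply, h1, h2]
    ring⟩

/-- The 1-chain `c_γ` of a path `γ`. -/
noncomputable def pathChain (γ : List X.E) : ↥X.C1 := (γ.map X.edgeChain).sum

/-- The inner product on `C₁(X,ℝ)` for which the edges form an orthonormal basis
(with `e⁻¹` counting as the negative of `e`). -/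
noncomputable def chainInner (c d : ↥X.C1) : ℝ :=
  (1/2) * ((c : X.E →₀ ℝ).sum fun e x => x * (d : X.E →₀ ℝ) e)

/-- The boundary of a 1-chain. -/
noncomputable def boundary (c : ↥X.C1) : X.V →₀ ℝ :=
  (c : X.E →₀ ℝ).sum fun e x => x • (Finsupp.single (X.t e) (1:ℝ) - Finsupp.single (X.s e) 1)

/-- A 1-cycle is a 1-chain with vanishing boundary. -/
def IsCycle (c : ↥X.C1) : Prop := X.boundary c = 0

/-- An integral 1-chain: all coefficients are integers. -/
def IsIntegral (c : ↥X.C1) : Prop := ∀ e, ∃ n : ℤ, (c : X.E →₀ ℝ) e = (n : ℝ)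

/-- The support of a 1-chain: the set of edges with positive coefficient. -/
def chainSupp (c : ↥X.C1) : Set X.E := {e | 0 < (c : X.E →₀ ℝ) e}

/-- `p` is the orthogonal projection of `C₁(X,ℝ)` onto the space `Z₁(X,ℝ)` of 1-cycles:
it takes values in `Z₁(X,ℝ)` and `c - p c` is orthogonal to every 1-cycle. -/
def IsOrthoProj (p : ↥X.C1 → ↥X.C1) : Prop :=
  (∀ c, X.IsCycle (p c)) ∧ (∀ c z, X.IsCycle z → X.chainInner (c - p c) z = 0)

/-- Two paths from `x` to `y` are homologous if one can be obtained from the other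
by repeatedly inserting or deleting subwords `e e⁻¹`, and/or replacing a subword
`στ` by `τσ` where `σ` and `τ` are loops based at the same vertex. -/
inductive Homologous : X.V → X.V → List X.E → List X.E → Prop
  | refl {x y : X.V} (γ : List X.E) (h : X.IsPath x y γ) : Homologous x y γ γ
  | cancel {x y : X.V} (γ δ : List X.E) (e : X.E)
      (h : X.IsPath x y (γ ++ e :: X.inv e :: δ)) (h' : X.IsPath x y (γ ++ δ)) :
      Homologous x y (γ ++ e :: X.inv e :: δ) (γ ++ δ)
  | swap {x y : X.V} (γ σ τ δ : List X.E) (v : X.V)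
      (hσ : X.IsPath v v σ) (hτ : X.IsPath v v τ)
      (h : X.IsPath x y (γ ++ (σ ++ (τ ++ δ))))
      (h' : X.IsPath x y (γ ++ (τ ++ (σ ++ δ)))) :
      Homologous x y (γ ++ (σ ++ (τ ++ δ))) (γ ++ (τ ++ (σ ++ δ)))
  | symm {x y : X.V} {a b : List X.E} (h : Homologous x y a b) : Homologous x y b a
  | trans {x y : X.V} {a b c : List X.E} (h1 : Homologous x y a b)
      (h2 : Homologous x y b c) : Homologous x y a c

/-- A simple path: no vertex is visited twice. -/
def IsSimplePath (x y : X.V) (γ : List X.E) : Prop :=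
  X.IsPath x y γ ∧ (x :: γ.map X.t).Nodup

/-- A simple loop based at `x`: a loop in which every vertex other than `x` occurs
at most once and `x` occurs only as the initial and final vertex. -/
def IsSimpleLoop (x : X.V) (γ : List X.E) : Prop :=
  X.IsPath x x γ ∧ (x :: (γ.map X.t).dropLast).Nodup

/-- A reduced word: no subword of the form `e e⁻¹`. -/
def Reduced (γ : List X.E) : Prop := γ.Chain' (fun a b => b ≠ X.inv a)

/-- A spanning tree: a set of edges, closed under inversion, such that the spanning
subgraph it determines is connected and has no nonempty reduced loops. -/
def IsSpanningTree (S : Set X.E) : Prop :=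
  (∀ e ∈ S, X.inv e ∈ S) ∧
  (∀ x y : X.V, ∃ γ : List X.E, X.IsPath x y γ ∧ ∀ e ∈ γ, e ∈ S) ∧
  (∀ (x : X.V) (γ : List X.E), X.IsPath x x γ → (∀ e ∈ γ, e ∈ S) → X.Reduced γ → γ = [])

/-- The quotient of a set of 1-chains by the translation action of the
integral 1-cycles. -/
def transQuot (S : Set ↥X.C1) : Type :=
  Quot (fun a b : S => ∃ z : ↥X.C1, X.IsCycle z ∧ X.IsIntegral z ∧ (b : ↥X.C1) = (a : ↥X.C1) + z)

end SGraph
namespace SGraph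

section Lemmas

variable {X : SGraph}

/-- Concatenation of paths. -/
theorem IsPath.append {x y z : X.V} {γ δ : List X.E}
    (h1 : X.IsPath x y γ) : X.IsPath y z δ → X.IsPath x z (γ ++ δ) := by
  induction h1 with
  | nil _ => intro h2; simpa using h2
  | cons e h ih => intro h2; exact .cons e (ih h2)

theorem isPath_single (X : SGraph) (e : X.E) : X.IsPath (X.s e) (X.t e) [e] :=
  .cons e (.nil _)

theorem isPath_single' (X : SGraph) (e : X.E) : X.IsPath (X.t e) (X.s e) [X.inv e] := by
  have := X.isPath_single (X.inv e)
  rwa [X.s_inv, X.t_inv] at this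

/-- The endpoint of a path starting at `x`. -/
def endFrom (X : SGraph) (x : X.V) (γ : List X.E) : X.V := γ.foldl (fun _ e => X.t e) x

theorem IsPath.endFrom_eq {x y : X.V} {γ : List X.E} (h : X.IsPath x y γ) :
    X.endFrom x γ = y := by
  induction h with
  | nil x => rfl
  | cons e h ih => exact ih

/-- Homologous paths are paths with the same endpoints. -/
theorem Homologous.isPath {x y : X.V} {a b : List X.E} (h : X.Homologous x y a b) :
    X.IsPath x y a ∧ X.IsPath x y b := by
  induction h with
  | refl γ h => exact ⟨h, h⟩
  | cancel γ δ e h h' => exact ⟨h, h'⟩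
  | swap γ σ τ δ v hσ hτ h h' => exact ⟨h, h'⟩
  | symm h ih => exact ⟨ih.2, ih.1⟩
  | trans h1 h2 ih1 ih2 => exact ⟨ih1.1, ih2.2⟩

/-- Appending a fixed path preserves homology. -/
theorem Homologous.append_right {x y z : X.V} {a b c : List X.E}
    (h : X.Homologous x y a b) (hc : X.IsPath y z c) :
    X.Homologous x z (a ++ c) (b ++ c) := by
  induction h with
  | refl γ hγ => exact .refl _ (hγ.append hc)
  | cancel γ δ e h h' =>
      have h1 : X.IsPath x z (γ ++ e :: X.inv e :: (δ ++ c)) := by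
        have := h.append hc; simpa using this
      have h2 : X.IsPath x z (γ ++ (δ ++ c)) := by
        have := h'.append hc; simpa using this
      have := Homologous.cancel γ (δ ++ c) e h1 h2
      simpa using this
  | swap γ σ τ δ v hσ hτ h h' =>
      have h1 : X.IsPath x z (γ ++ (σ ++ (τ ++ (δ ++ c)))) := by
        have := h.append hc; simpa using this
      have h2 : X.IsPath x z (γ ++ (τ ++ (σ ++ (δ ++ c)))) := by
        have := h'.append hc; simpa using this
      have := Homologous.swap γ σ τ (δ ++ c) v hσ hτ h1 h2
      simpa using this
  | symm h ih => exact ih.symm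
  | trans h1 h2 ih1 ih2 => exact ih1.trans ih2

/-- Prepending a fixed path preserves homology. -/
theorem Homologous.prepend_left {w x y : X.V} {a b c : List X.E}
    (hc : X.IsPath w x c) (h : X.Homologous x y a b) :
    X.Homologous w y (c ++ a) (c ++ b) := by
  induction h with
  | refl γ hγ => exact .refl _ (hc.append hγ)
  | cancel γ δ e h h' =>
      have h1 : X.IsPath w y ((c ++ γ) ++ e :: X.inv e :: δ) := by
        have := hc.append h; simpa using this
      have h2 : X.IsPath w y ((c ++ γ) ++ δ) := by
        have := hc.append h'; simpa using this
      have := Homologous.cancel (c ++ γ) δ e h1 h2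
      simpa using this
  | swap γ σ τ δ v hσ hτ h h' =>
      have h1 : X.IsPath w y ((c ++ γ) ++ (σ ++ (τ ++ δ))) := by
        have := hc.append h; simpa using this
      have h2 : X.IsPath w y ((c ++ γ) ++ (τ ++ (σ ++ δ))) := by
        have := hc.append h'; simpa using this
      have := Homologous.swap (c ++ γ) σ τ δ v hσ hτ h1 h2
      simpa using this
  | symm h ih => exact ih.symm
  | trans h1 h2 ih1 ih2 => exact ih1.trans ih2

/-- The reverse of a word of edges: reverse the order and invert each edge. -/
def revP (X : SGraph) (γ : List X.E) : List X.E := (γ.map X.inv).reverse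

theorem IsPath.revP {x y : X.V} {γ : List X.E} (h : X.IsPath x y γ) :
    X.IsPath y x (X.revP γ) := by
  induction h with
  | nil x => exact .nil x
  | cons e h ih =>
      have := ih.append (X.isPath_single' e)
      simpa [SGraph.revP] using this

theorem Homologous.revP {x y : X.V} {a b : List X.E} (h : X.Homologous x y a b) :
    X.Homologous y x (X.revP a) (X.revP b) := by
  induction h with
  | refl γ hγ => exact .refl _ hγ.revP
  | cancel γ δ e h h' =>
      have key : X.revP (γ ++ e :: X.inv e :: δ) = X.revP δ ++ e :: X.inv e :: X.revP γ := by
        simp [SGraph.revP, X.inv_inv]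
      have key2 : X.revP (γ ++ δ) = X.revP δ ++ X.revP γ := by
        simp [SGraph.revP]
      have p1 : X.IsPath y x (X.revP δ ++ e :: X.inv e :: X.revP γ) := by
        have := h.revP; rwa [key] at this
      have p2 : X.IsPath y x (X.revP δ ++ X.revP γ) := by
        have := h'.revP; rwa [key2] at this
      rw [key, key2]
      exact Homologous.cancel _ _ _ p1 p2
  | swap γ σ τ δ v hσ hτ h h' =>
      have key : X.revP (γ ++ (σ ++ (τ ++ δ)))
          = X.revP δ ++ (X.revP τ ++ (X.revP σ ++ X.revP γ)) := by
        simp [SGraph.revP]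
      have key2 : X.revP (γ ++ (τ ++ (σ ++ δ)))
          = X.revP δ ++ (X.revP σ ++ (X.revP τ ++ X.revP γ)) := by
        simp [SGraph.revP]
      have p1 : X.IsPath y x (X.revP δ ++ (X.revP τ ++ (X.revP σ ++ X.revP γ))) := by
        have := h.revP; rwa [key] at this
      have p2 : X.IsPath y x (X.revP δ ++ (X.revP σ ++ (X.revP τ ++ X.revP γ))) := by
        have := h'.revP; rwa [key2] at this
      rw [key, key2]
      exact Homologous.swap _ _ _ _ v hτ.revP hσ.revP p1 p2
  | symm h ih => exact ih.symm
  | trans h1 h2 ih1 ih2 => exact ih1.trans ih2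

/-- `γ⁻¹ γ` is homologous to the trivial path. -/
theorem homologous_revP_append {x y : X.V} {γ : List X.E} (h : X.IsPath x y γ) :
    X.Homologous y y (X.revP γ ++ γ) [] := by
  induction h with
  | nil x => exact .refl [] (.nil x)
  | @cons e y' γ' h ih =>
      have p0 : X.IsPath (X.t e) y' (X.inv e :: e :: γ') := by
        have tail : X.IsPath (X.t (X.inv e)) y' (e :: γ') := by
          rw [X.t_inv]; exact .cons e h
        have := IsPath.cons (X.inv e) tail
        rwa [X.s_inv] at this
      have p1 : X.IsPath y' y' (X.revP γ' ++ X.inv e :: e :: γ') := h.revP.append p0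
      have p2 : X.IsPath y' y' (X.revP γ' ++ γ') := h.revP.append h
      have step : X.Homologous y' y' (X.revP γ' ++ X.inv e :: e :: γ') (X.revP γ' ++ γ') := by
        have := Homologous.cancel (X.revP γ') γ' (X.inv e)
          (by rwa [X.inv_inv]) (by exact p2)
        rwa [X.inv_inv] at this
      have goal_eq : X.revP (e :: γ') ++ e :: γ' = X.revP γ' ++ X.inv e :: e :: γ' := by
        simp [SGraph.revP]
      rw [goal_eq]
      exact step.trans ih

end Lemmas

end SGraph
namespace SGraph

/-- A map of graphs. -/
structure Hom (X Y : SGraph) where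
  vMap : X.V → Y.V
  eMap : X.E → Y.E
  map_s : ∀ e, Y.s (eMap e) = vMap (X.s e)
  map_t : ∀ e, Y.t (eMap e) = vMap (X.t e)
  map_inv : ∀ e, Y.inv (eMap e) = eMap (X.inv e)

/-- Composition of maps of graphs. -/
def Hom.comp {X Y Z : SGraph} (f : Hom Y Z) (g : Hom X Y) : Hom X Z where
  vMap := fun v => f.vMap (g.vMap v)
  eMap := fun e => f.eMap (g.eMap e)
  map_s := fun e => by rw [f.map_s, g.map_s]
  map_t := fun e => by rw [f.map_t, g.map_t]
  map_inv := fun e => by rw [f.map_inv, g.map_inv]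

/-- The identity map of graphs. -/
def Hom.idHom (X : SGraph) : Hom X X :=
  ⟨fun v => v, fun e => e, fun _ => rfl, fun _ => rfl, fun _ => rfl⟩

theorem IsPath.map {X Y : SGraph} {x y : X.V} {γ : List X.E}
    (h : X.IsPath x y γ) (f : Hom X Y) :
    Y.IsPath (f.vMap x) (f.vMap y) (γ.map f.eMap) := by
  induction h with
  | nil x => exact .nil _
  | cons e h ih =>
      rw [← f.map_t] at ih
      have := IsPath.cons (f.eMap e) ih
      rwa [f.map_s] at this

/-- An automorphism of a graph. -/
structure Aut (X : SGraph) where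
  toHom : Hom X X
  invHom : Hom X X
  left_inv : Hom.comp invHom toHom = Hom.idHom X
  right_inv : Hom.comp toHom invHom = Hom.idHom X

theorem Aut.ext' {X : SGraph} {f g : Aut X} (h : f.toHom = g.toHom) : f = g := by
  obtain ⟨ft, fi, fl, fr⟩ := f
  obtain ⟨gt, gi, gl, gr⟩ := g
  simp only at h
  subst h
  have key : fi = gi := by
    calc fi = Hom.comp fi (Hom.idHom X) := rfl
      _ = Hom.comp fi (Hom.comp ft gi) := by rw [gr]
      _ = Hom.comp (Hom.comp fi ft) gi := rfl
      _ = Hom.comp (Hom.idHom X) gi := by rw [fl]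
      _ = gi := rfl
  subst key
  rfl

/-- The automorphism group of a graph. -/
instance (X : SGraph) : Group (Aut X) where
  mul f g := ⟨Hom.comp f.toHom g.toHom, Hom.comp g.invHom f.invHom,
    by
      show Hom.comp (Hom.comp g.invHom f.invHom) (Hom.comp f.toHom g.toHom) = Hom.idHom X
      calc Hom.comp (Hom.comp g.invHom f.invHom) (Hom.comp f.toHom g.toHom)
          = Hom.comp g.invHom (Hom.comp (Hom.comp f.invHom f.toHom) g.toHom) := rfl
        _ = Hom.comp g.invHom (Hom.comp (Hom.idHom X) g.toHom) := by rw [f.left_inv]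
        _ = Hom.comp g.invHom g.toHom := rfl
        _ = Hom.idHom X := g.left_inv,
    by
      show Hom.comp (Hom.comp f.toHom g.toHom) (Hom.comp g.invHom f.invHom) = Hom.idHom X
      calc Hom.comp (Hom.comp f.toHom g.toHom) (Hom.comp g.invHom f.invHom)
          = Hom.comp f.toHom (Hom.comp (Hom.comp g.toHom g.invHom) f.invHom) := rfl
        _ = Hom.comp f.toHom (Hom.comp (Hom.idHom X) f.invHom) := by rw [g.right_inv]
        _ = Hom.comp f.toHom f.invHom := rfl
        _ = Hom.idHom X := f.right_inv⟩
  one := ⟨Hom.idHom X, Hom.idHom X, rfl, rfl⟩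
  inv f := ⟨f.invHom, f.toHom, f.right_inv, f.left_inv⟩
  mul_assoc f g h := Aut.ext' rfl
  one_mul f := Aut.ext' rfl
  mul_one f := Aut.ext' rfl
  inv_mul_cancel f := Aut.ext' f.left_inv

variable (X : SGraph)

/-- Paths in `X` starting at the basepoint `x₀`. -/
def PathFrom (x₀ : X.V) : Type := {γ : List X.E // ∃ y, X.IsPath x₀ y γ}

/-- Two paths from the basepoint are related if they are homologous. -/
def AtomRel (x₀ : X.V) (a b : X.PathFrom x₀) : Prop := ∃ y, X.Homologous x₀ y a.1 b.1

/-- The atoms: homology classes of paths starting at the basepoint.  These are the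
vertices of the maximal abelian cover. -/
def Atom (x₀ : X.V) : Type := Quot (X.AtomRel x₀)

/-- Data for an edge of the maximal abelian cover: a path `α` from the basepoint
together with an edge `e` with `s(e)` the endpoint of `α`. -/
def BarBase (x₀ : X.V) : Type := {q : List X.E × X.E // X.IsPath x₀ (X.s q.2) q.1}

def BarRel (x₀ : X.V) (q q' : X.BarBase x₀) : Prop :=
  q.1.2 = q'.1.2 ∧ X.Homologous x₀ (X.s q.1.2) q.1.1 q'.1.1

/-- The edges of the maximal abelian cover. -/
def BarEdge (x₀ : X.V) : Type := Quot (X.BarRel x₀)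

def barS (x₀ : X.V) : X.BarEdge x₀ → X.Atom x₀ :=
  Quot.lift (fun q => Quot.mk _ ⟨q.1.1, ⟨X.s q.1.2, q.2⟩⟩)
    (fun q q' h => Quot.sound ⟨X.s q.1.2, h.2⟩)

def barT (x₀ : X.V) : X.BarEdge x₀ → X.Atom x₀ :=
  Quot.lift
    (fun q => Quot.mk _ ⟨q.1.1 ++ [q.1.2], ⟨X.t q.1.2, q.2.append (X.isPath_single q.1.2)⟩⟩)
    (fun q q' h => by
      apply Quot.sound
      refine ⟨X.t q.1.2, ?_⟩
      show X.Homologous x₀ (X.t q.1.2) (q.1.1 ++ [q.1.2]) (q'.1.1 ++ [q'.1.2])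
      rw [← h.1]
      exact Homologous.append_right h.2 (X.isPath_single q.1.2))

def barInv (x₀ : X.V) : X.BarEdge x₀ → X.BarEdge x₀ :=
  Quot.lift
    (fun q => Quot.mk _ ⟨(q.1.1 ++ [q.1.2], X.inv q.1.2), by
      rw [X.s_inv]; exact q.2.append (X.isPath_single q.1.2)⟩)
    (fun q q' h => by
      apply Quot.sound
      constructor
      · show X.inv q.1.2 = X.inv q'.1.2
        rw [h.1]
      · show X.Homologous x₀ (X.s (X.inv q.1.2)) (q.1.1 ++ [q.1.2]) (q'.1.1 ++ [q'.1.2])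
        rw [X.s_inv, ← h.1]
        exact Homologous.append_right h.2 (X.isPath_single q.1.2))

def eproj (x₀ : X.V) : X.BarEdge x₀ → X.E := Quot.lift (fun q => q.1.2) (fun _ _ h => h.1)

def atomEnd (x₀ : X.V) : X.Atom x₀ → X.V :=
  Quot.lift (fun γ => X.endFrom x₀ γ.1)
    (fun a b h => by
      show X.endFrom x₀ a.1 = X.endFrom x₀ b.1
      obtain ⟨y, hy⟩ := h
      obtain ⟨ha, hb⟩ := hy.isPath
      rw [ha.endFrom_eq, hb.endFrom_eq])

private theorem isPath_pair (e : X.E) : X.IsPath (X.s e) (X.s e) [e, X.inv e] := by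
  have tail : X.IsPath (X.t (X.inv e)) (X.s e) [] := by rw [X.t_inv]; exact .nil _
  have mid : X.IsPath (X.t e) (X.s e) [X.inv e] := by
    have := IsPath.cons (X.inv e) tail
    rwa [X.s_inv] at this
  exact .cons e mid

private theorem hom_cancel_pair (x₀ : X.V) (q : X.BarBase x₀) :
    X.Homologous x₀ (X.s q.1.2) ((q.1.1 ++ [q.1.2]) ++ [X.inv q.1.2]) q.1.1 := by
  have p1 : X.IsPath x₀ (X.s q.1.2) (q.1.1 ++ q.1.2 :: X.inv q.1.2 :: []) :=
    q.2.append (X.isPath_pair q.1.2)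
  have p2 : X.IsPath x₀ (X.s q.1.2) (q.1.1 ++ []) := by simpa using q.2
  have := Homologous.cancel q.1.1 [] q.1.2 p1 p2
  simpa using this

/-- The maximal abelian cover of `X` relative to the basepoint `x₀`. -/
def Bar (x₀ : X.V) : SGraph where
  V := X.Atom x₀
  E := X.BarEdge x₀
  s := X.barS x₀
  t := X.barT x₀
  inv := X.barInv x₀
  s_inv := fun e =>
    @Quot.ind _ _ (fun e => X.barS x₀ (X.barInv x₀ e) = X.barT x₀ e)
      (fun q => rfl) e
  t_inv := fun e =>
    @Quot.ind _ _ (fun e => X.barT x₀ (X.barInv x₀ e) = X.barS x₀ e)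
      (fun q => Quot.sound ⟨X.s q.1.2, by
        show X.Homologous x₀ (X.s q.1.2) ((q.1.1 ++ [q.1.2]) ++ [X.inv q.1.2]) q.1.1
        exact X.hom_cancel_pair x₀ q⟩) e
  inv_inv := fun e =>
    @Quot.ind _ _ (fun e => X.barInv x₀ (X.barInv x₀ e) = e)
      (fun q => Quot.sound ⟨by show X.inv (X.inv q.1.2) = q.1.2; rw [X.inv_inv], by
        show X.Homologous x₀ (X.s (X.inv (X.inv q.1.2)))
          ((q.1.1 ++ [q.1.2]) ++ [X.inv q.1.2]) q.1.1
        rw [X.inv_inv]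
        exact X.hom_cancel_pair x₀ q⟩) e
  inv_ne := fun e =>
    @Quot.ind _ _ (fun e => X.barInv x₀ e ≠ e)
      (fun q h => X.inv_ne q.1.2 (congrArg (X.eproj x₀) h)) e

/-- The covering map from the maximal abelian cover to `X`. -/
def proj (x₀ : X.V) : Hom (X.Bar x₀) X where
  vMap := X.atomEnd x₀
  eMap := X.eproj x₀
  map_s := fun e =>
    @Quot.ind _ _ (fun e => X.s (X.eproj x₀ e) = X.atomEnd x₀ (X.barS x₀ e))
      (fun q => (q.2.endFrom_eq).symm) e
  map_t := fun e =>
    @Quot.ind _ _ (fun e => X.t (X.eproj x₀ e) = X.atomEnd x₀ (X.barT x₀ e))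
      (fun q => ((q.2.append (X.isPath_single q.1.2)).endFrom_eq).symm) e
  map_inv := fun e =>
    @Quot.ind _ _ (fun e => X.inv (X.eproj x₀ e) = X.eproj x₀ (X.barInv x₀ e))
      (fun q => rfl) e

/-- `g` covers `f` when `q ∘ g = f ∘ q`. -/
def Covers (x₀ : X.V) (g : Aut (X.Bar x₀)) (f : Aut X) : Prop :=
  Hom.comp (X.proj x₀) g.toHom = Hom.comp f.toHom (X.proj x₀)

/-- The group of covering symmetries: automorphisms of the maximal abelian cover
that cover some automorphism of `X`. -/
def Cov (x₀ : X.V) : Subgroup (Aut (X.Bar x₀)) where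
  carrier := {g | ∃ f : Aut X, X.Covers x₀ g f}
  one_mem' := ⟨1, rfl⟩
  mul_mem' := by
    rintro a b ⟨f, hf⟩ ⟨f', hf'⟩
    refine ⟨f * f', ?_⟩
    show Hom.comp (X.proj x₀) (Hom.comp a.toHom b.toHom)
        = Hom.comp (Hom.comp f.toHom f'.toHom) (X.proj x₀)
    calc Hom.comp (X.proj x₀) (Hom.comp a.toHom b.toHom)
        = Hom.comp (Hom.comp (X.proj x₀) a.toHom) b.toHom := rfl
      _ = Hom.comp (Hom.comp f.toHom (X.proj x₀)) b.toHom := by rw [hf]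
      _ = Hom.comp f.toHom (Hom.comp (X.proj x₀) b.toHom) := rfl
      _ = Hom.comp f.toHom (Hom.comp f'.toHom (X.proj x₀)) := by rw [hf']
      _ = Hom.comp (Hom.comp f.toHom f'.toHom) (X.proj x₀) := rfl
  inv_mem' := by
    rintro a ⟨f, hf⟩
    refine ⟨f⁻¹, ?_⟩
    show Hom.comp (X.proj x₀) a.invHom = Hom.comp f.invHom (X.proj x₀)
    have key : Hom.comp (Hom.comp f.invHom (X.proj x₀)) a.toHom = X.proj x₀ := by
      calc Hom.comp (Hom.comp f.invHom (X.proj x₀)) a.toHom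
          = Hom.comp f.invHom (Hom.comp (X.proj x₀) a.toHom) := rfl
        _ = Hom.comp f.invHom (Hom.comp f.toHom (X.proj x₀)) := by rw [hf]
        _ = Hom.comp (Hom.comp f.invHom f.toHom) (X.proj x₀) := rfl
        _ = Hom.comp (Hom.idHom X) (X.proj x₀) := by rw [f.left_inv]
        _ = X.proj x₀ := rfl
    calc Hom.comp (X.proj x₀) a.invHom
        = Hom.comp (Hom.comp (Hom.comp f.invHom (X.proj x₀)) a.toHom) a.invHom := by rw [key]
      _ = Hom.comp (Hom.comp f.invHom (X.proj x₀)) (Hom.comp a.toHom a.invHom) := rfl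
      _ = Hom.comp (Hom.comp f.invHom (X.proj x₀)) (Hom.idHom _) := by rw [a.right_inv]
      _ = Hom.comp f.invHom (X.proj x₀) := rfl

end SGraph
namespace SGraph

variable (X : SGraph)

/-- Loops based at `x₀`. -/
def LoopAt (x₀ : X.V) : Type := {γ : List X.E // X.IsPath x₀ x₀ γ}

def H1Rel (x₀ : X.V) (a b : X.LoopAt x₀) : Prop := X.Homologous x₀ x₀ a.1 b.1

/-- The group of homology classes of loops based at `x₀`, with composition as
the group operation: this is `H₁(X,ℤ)`. -/
def H1 (x₀ : X.V) : Type := Quot (X.H1Rel x₀)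

def h1one (x₀ : X.V) : X.H1 x₀ := Quot.mk _ ⟨[], .nil x₀⟩

def h1mul (x₀ : X.V) : X.H1 x₀ → X.H1 x₀ → X.H1 x₀ :=
  Quot.lift
    (fun a => Quot.lift
      (fun b => Quot.mk (X.H1Rel x₀) ⟨a.1 ++ b.1, a.2.append b.2⟩)
      (fun b b' hb => Quot.sound (Homologous.prepend_left a.2 hb)))
    (fun a a' ha => by
      funext b
      refine @Quot.ind _ _
        (fun b => Quot.lift _ _ b = Quot.lift _ _ b) (fun b => ?_) b
      exact Quot.sound (ha.append_right b.2))

def h1inv (x₀ : X.V) : X.H1 x₀ → X.H1 x₀ :=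
  Quot.lift (fun a => Quot.mk (X.H1Rel x₀) ⟨X.revP a.1, a.2.revP⟩)
    (fun a a' h => Quot.sound h.revP)

theorem h1mul_assoc (x₀ : X.V) (a b c : X.H1 x₀) :
    X.h1mul x₀ (X.h1mul x₀ a b) c = X.h1mul x₀ a (X.h1mul x₀ b c) := by
  refine @Quot.ind _ _
    (fun a => ∀ b c, X.h1mul x₀ (X.h1mul x₀ a b) c = X.h1mul x₀ a (X.h1mul x₀ b c))
    (fun a => ?_) a b c
  intro b c
  refine @Quot.ind _ _
    (fun b => ∀ c, X.h1mul x₀ (X.h1mul x₀ (Quot.mk _ a) b) c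
      = X.h1mul x₀ (Quot.mk _ a) (X.h1mul x₀ b c)) (fun b => ?_) b c
  intro c
  refine @Quot.ind _ _
    (fun c => X.h1mul x₀ (X.h1mul x₀ (Quot.mk _ a) (Quot.mk _ b)) c
      = X.h1mul x₀ (Quot.mk _ a) (X.h1mul x₀ (Quot.mk _ b) c)) (fun c => ?_) c
  exact congrArg (Quot.mk _) (Subtype.ext (List.append_assoc a.1 b.1 c.1))

theorem h1_one_mul (x₀ : X.V) (a : X.H1 x₀) : X.h1mul x₀ (X.h1one x₀) a = a := by
  refine @Quot.ind _ _ (fun a => X.h1mul x₀ (X.h1one x₀) a = a) (fun a => ?_) a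
  rfl

theorem h1_mul_one (x₀ : X.V) (a : X.H1 x₀) : X.h1mul x₀ a (X.h1one x₀) = a := by
  refine @Quot.ind _ _ (fun a => X.h1mul x₀ a (X.h1one x₀) = a) (fun a => ?_) a
  exact congrArg (Quot.mk _) (Subtype.ext (List.append_nil a.1))

theorem h1_inv_mul (x₀ : X.V) (a : X.H1 x₀) :
    X.h1mul x₀ (X.h1inv x₀ a) a = X.h1one x₀ := by
  refine @Quot.ind _ _ (fun a => X.h1mul x₀ (X.h1inv x₀ a) a = X.h1one x₀)
    (fun a => ?_) a
  exact Quot.sound (homologous_revP_append a.2)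

instance instGroupH1 (x₀ : X.V) : Group (X.H1 x₀) where
  one := X.h1one x₀
  mul := X.h1mul x₀
  inv := X.h1inv x₀
  mul_assoc := X.h1mul_assoc x₀
  one_mul := X.h1_one_mul x₀
  mul_one := X.h1_mul_one x₀
  inv_mul_cancel := X.h1_inv_mul x₀

theorem boundary_add (c d : ↥X.C1) : X.boundary (c + d) = X.boundary c + X.boundary d := by
  show Finsupp.sum ((c : X.E →₀ ℝ) + (d : X.E →₀ ℝ)) _ = _
  exact Finsupp.sum_add_index' (fun e => zero_smul ℝ _) (fun e x y => add_smul x y _)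

theorem boundary_smul (r : ℝ) (c : ↥X.C1) : X.boundary (r • c) = r • X.boundary c := by
  unfold boundary
  have hc : ((r • c : ↥X.C1) : X.E →₀ ℝ) = r • (c : X.E →₀ ℝ) := rfl
  rw [hc, Finsupp.sum_smul_index, Finsupp.smul_sum]
  · exact Finsupp.sum_congr fun e _ => by rw [mul_smul]
  · intro e
    exact zero_smul ℝ _

theorem boundary_zero : X.boundary 0 = 0 := by
  show Finsupp.sum (0 : X.E →₀ ℝ) _ = 0
  exact Finsupp.sum_zero_index

/-- The space `Z₁(X,ℝ)` of 1-cycles, as a subspace of `C₁(X,ℝ)`. -/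
noncomputable def Z1 : Submodule ℝ ↥X.C1 where
  carrier := {c | X.IsCycle c}
  add_mem' := fun {a b} ha hb => by
    show X.IsCycle (a + b)
    unfold IsCycle at *
    rw [X.boundary_add, ha, hb, add_zero]
  zero_mem' := X.boundary_zero
  smul_mem' := fun r c hc => by
    show X.IsCycle (r • c)
    unfold IsCycle at *
    rw [X.boundary_smul, hc, smul_zero]

/-- A map of the space of 1-cycles is affine if it is a linear map followed by
a translation. -/
def IsAffine (T : ↥X.Z1 → ↥X.Z1) : Prop :=
  ∃ (L : ↥X.Z1 →ₗ[ℝ] ↥X.Z1) (v : ↥X.Z1), ∀ c, T c = v + L c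

/-- The permutation of edges induced by an automorphism. -/
def eEquiv (f : X.Aut) : X.E ≃ X.E where
  toFun := f.toHom.eMap
  invFun := f.invHom.eMap
  left_inv := fun e => congrFun (congrArg Hom.eMap f.left_inv) e
  right_inv := fun e => congrFun (congrArg Hom.eMap f.right_inv) e

/-- The linear action `f_*` of an automorphism `f` on 1-chains, with
`f_*(e) = f(e)` for every edge. -/
noncomputable def pushChain (f : X.Aut) (c : ↥X.C1) : ↥X.C1 :=
  ⟨Finsupp.equivMapDomain (X.eEquiv f) (c : X.E →₀ ℝ), by
    intro e
    rw [Finsupp.equivMapDomain_apply, Finsupp.equivMapDomain_apply]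
    have h1 : (X.eEquiv f).symm (X.inv e) = X.inv ((X.eEquiv f).symm e) := by
      show f.invHom.eMap (X.inv e) = X.inv (f.invHom.eMap e)
      exact (f.invHom.map_inv e).symm
    rw [h1]
    exact c.2 _⟩

/-- The image of the atom `⟦δ⟧` under the covering symmetry determined by the
pair `(f, ⟦β⟧)`: the atom `⟦β f(δ)⟧`. -/
def mapPathFrom (x₀ : X.V) (f : X.Aut) (β : List X.E)
    (hβ : X.IsPath x₀ (f.toHom.vMap x₀) β) (δ : X.PathFrom x₀) : X.PathFrom x₀ :=
  ⟨β ++ δ.1.map f.toHom.eMap, by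
    obtain ⟨y, hy⟩ := δ.2
    exact ⟨f.toHom.vMap y, hβ.append (hy.map f.toHom)⟩⟩

/-- The image of the edge `(⟦α⟧, e)` under the covering symmetry determined by the
pair `(f, ⟦β⟧)`: the edge `(⟦β f(α)⟧, f(e))`. -/
def mapBarBase (x₀ : X.V) (f : X.Aut) (β : List X.E)
    (hβ : X.IsPath x₀ (f.toHom.vMap x₀) β) (q : X.BarBase x₀) : X.BarBase x₀ :=
  ⟨(β ++ q.1.1.map f.toHom.eMap, f.toHom.eMap q.1.2), by
    show X.IsPath x₀ (X.s (f.toHom.eMap q.1.2)) _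
    rw [f.toHom.map_s]
    exact hβ.append (q.2.map f.toHom)⟩

/-- The automorphism `g` of the maximal abelian cover acts as the pair `(f, ⟦β⟧)`:
it maps each atom `⟦α⟧` to `⟦β f(α)⟧` and each edge `(⟦α⟧, e)` to `(⟦β f(α)⟧, f(e))`. -/
def ActsAs (x₀ : X.V) (g : Aut (X.Bar x₀)) (f : X.Aut) (β : List X.E) : Prop :=
  ∃ hβ : X.IsPath x₀ (f.toHom.vMap x₀) β,
    (∀ δ : X.PathFrom x₀,
      g.toHom.vMap (Quot.mk _ δ) = Quot.mk _ (X.mapPathFrom x₀ f β hβ δ)) ∧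
    (∀ q : X.BarBase x₀,
      g.toHom.eMap (Quot.mk _ q) = Quot.mk _ (X.mapBarBase x₀ f β hβ q))

/-- The automorphism `g` of the maximal abelian cover is the deck transformation
determined by the loop `γ` based at `x₀`: it maps each atom `⟦δ⟧` to `⟦γδ⟧`. -/
def IsDeck (x₀ : X.V) (g : Aut (X.Bar x₀)) (γ : X.LoopAt x₀) : Prop :=
  ∀ δ : X.PathFrom x₀, g.toHom.vMap (Quot.mk _ δ) =
    Quot.mk _ (⟨γ.1 ++ δ.1, by
      obtain ⟨y, hy⟩ := δ.2
      exact ⟨y, γ.2.append hy⟩⟩ : X.PathFrom x₀)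

/-- `ρ` is an action of the group of covering symmetries by affine transformations
of `Z₁(X,ℝ)` for which the embedding of the atoms is equivariant:
`ρ(g)(i(⟦α⟧)) = i(g(⟦α⟧))`. -/
def GoodAction (x₀ : X.V) (π : ↥X.C1 → ↥X.C1)
    (ρ : ↥(X.Cov x₀) → (↥X.Z1 → ↥X.Z1)) : Prop :=
  ρ 1 = id ∧ (∀ g h, ρ (g * h) = ρ g ∘ ρ h) ∧ (∀ g, X.IsAffine (ρ g)) ∧
  ∀ (g : ↥(X.Cov x₀)) (α δ : X.PathFrom x₀),
    g.1.toHom.vMap (Quot.mk _ α) = Quot.mk _ δ →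
    ∀ z w : ↥X.Z1, (z : ↥X.C1) = π (X.pathChain α.1) →
      (w : ↥X.C1) = π (X.pathChain δ.1) → ρ g z = w

end SGraph

/-! The identity is formal once two facts about the orthogonal projection `π` onto the
cycle space are known: `π` is additive, and it commutes with `f_*`, because `f_*` is an
isometry of `C₁(X,ℝ)` mapping cycles to cycles (with inverse `(f⁻¹)_*`), and `π c` is
characterised as the cycle `z` with `c - z` orthogonal to all cycles. Then
`π(c_β) + f_*(π c) = π(c_β + f_* c)`, and `f_*` sends `c_α + t·e` to
`c_{f(α)} + t·f(e)`. -/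

namespace SGraph

variable {X : SGraph}

theorem chainInner_add_left (c d z : ↥X.C1) :
    X.chainInner (c + d) z = X.chainInner c z + X.chainInner d z := by
  unfold chainInner
  rw [Submodule.coe_add,
    Finsupp.sum_add_index' (fun _ => zero_mul _) (fun _ _ _ => add_mul _ _ _), mul_add]

theorem chainInner_sub_left (c d z : ↥X.C1) :
    X.chainInner (c - d) z = X.chainInner c z - X.chainInner d z := by
  unfold chainInner
  rw [Submodule.coe_sub, Finsupp.sum_sub_index (fun _ _ _ => sub_mul _ _ _), mul_sub]

theorem eq_zero_of_chainInner_self_eq_zero {c : ↥X.C1} (h : X.chainInner c c = 0) :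
    c = 0 := by
  have hsum :
      ∑ e ∈ (c : X.E →₀ ℝ).support, (c : X.E →₀ ℝ) e * (c : X.E →₀ ℝ) e = 0 := by
    unfold chainInner Finsupp.sum at h
    linarith
  rw [Finset.sum_eq_zero_iff_of_nonneg fun e _ => mul_self_nonneg _] at hsum
  ext e
  by_contra hne
  exact hne (mul_self_eq_zero.mp (hsum e (Finsupp.mem_support_iff.mpr hne)))

noncomputable def pushChainₗ (f : X.Aut) : ↥X.C1 →ₗ[ℝ] ↥X.C1 where
  toFun := X.pushChain f
  map_add' _ _ := by ext; rfl
  map_smul' _ _ := by ext; rfl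

theorem pushChain_add (f : X.Aut) (a b : ↥X.C1) :
    X.pushChain f (a + b) = X.pushChain f a + X.pushChain f b :=
  (pushChainₗ f).map_add a b

theorem pushChain_sub (f : X.Aut) (a b : ↥X.C1) :
    X.pushChain f (a - b) = X.pushChain f a - X.pushChain f b :=
  map_sub (pushChainₗ f) a b

theorem pushChain_smul (f : X.Aut) (r : ℝ) (a : ↥X.C1) :
    X.pushChain f (r • a) = r • X.pushChain f a :=
  (pushChainₗ f).map_smul r a

theorem pushChain_edgeChain (f : X.Aut) (e : X.E) :
    X.pushChain f (X.edgeChain e) = X.edgeChain (f.toHom.eMap e) := by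
  apply Subtype.ext
  change Finsupp.equivMapDomain (X.eEquiv f) (Finsupp.single e 1 - Finsupp.single (X.inv e) 1) =
    Finsupp.single (f.toHom.eMap e) 1 - Finsupp.single (X.inv (f.toHom.eMap e)) 1
  rw [Finsupp.equivMapDomain_eq_mapDomain, Finsupp.mapDomain_sub, Finsupp.mapDomain_single,
    Finsupp.mapDomain_single, f.toHom.map_inv]
  rfl

theorem pushChain_pathChain (f : X.Aut) (γ : List X.E) :
    X.pushChain f (X.pathChain γ) = X.pathChain (γ.map f.toHom.eMap) := by
  unfold pathChain
  change pushChainₗ f _ = _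
  rw [map_list_sum, List.map_map, List.map_map]
  exact congrArg List.sum (List.map_congr_left fun e _ => pushChain_edgeChain f e)

theorem pathChain_append (γ δ : List X.E) :
    X.pathChain (γ ++ δ) = X.pathChain γ + X.pathChain δ := by
  unfold pathChain
  rw [List.map_append, List.sum_append]

theorem pushChain_pushChain_inv (f : X.Aut) (c : ↥X.C1) :
    X.pushChain f (X.pushChain f⁻¹ c) = c := by
  ext e
  exact congrArg (c : X.E →₀ ℝ) (congrFun (congrArg Hom.eMap f.right_inv) e)

theorem chainInner_pushChain (f : X.Aut) (c d : ↥X.C1) :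
    X.chainInner (X.pushChain f c) (X.pushChain f d) = X.chainInner c d := by
  unfold chainInner
  change (1 / 2 : ℝ) * (Finsupp.equivMapDomain (X.eEquiv f) (c : X.E →₀ ℝ)).sum _ = _
  rw [Finsupp.sum_equivMapDomain]
  congr 1
  refine Finsupp.sum_congr fun e _ => ?_
  change _ * (d : X.E →₀ ℝ) ((X.eEquiv f).symm (X.eEquiv f e)) = _
  rw [Equiv.symm_apply_apply]

theorem boundary_pushChain (f : X.Aut) (c : ↥X.C1) :
    X.boundary (X.pushChain f c) = Finsupp.mapDomain f.toHom.vMap (X.boundary c) := by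
  unfold boundary
  change (Finsupp.equivMapDomain (X.eEquiv f) (c : X.E →₀ ℝ)).sum _ = _
  rw [Finsupp.sum_equivMapDomain, ← Finsupp.lmapDomain_apply ℝ ℝ, map_finsuppSum]
  refine Finsupp.sum_congr fun e _ => ?_
  rw [map_smul, map_sub, Finsupp.lmapDomain_apply, Finsupp.lmapDomain_apply,
    Finsupp.mapDomain_single, Finsupp.mapDomain_single]
  change _ • (Finsupp.single (X.t (f.toHom.eMap e)) _ -
    Finsupp.single (X.s (f.toHom.eMap e)) _) = _
  rw [f.toHom.map_t, f.toHom.map_s]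

theorem IsCycle.pushChain {c : ↥X.C1} (hc : X.IsCycle c) (f : X.Aut) :
    X.IsCycle (X.pushChain f c) := by
  rw [IsCycle, boundary_pushChain, hc, Finsupp.mapDomain_zero]

namespace IsOrthoProj

variable {π : ↥X.C1 → ↥X.C1}

theorem eq_of_isCycle_of_orthogonal (hπ : X.IsOrthoProj π) {c z : ↥X.C1} (hz : X.IsCycle z)
    (horth : ∀ w, X.IsCycle w → X.chainInner (c - z) w = 0) : π c = z := by
  have hcyc : π c - z ∈ X.Z1 := X.Z1.sub_mem (x := π c) (y := z) (hπ.1 c) hz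
  refine sub_eq_zero.mp (eq_zero_of_chainInner_self_eq_zero ?_)
  calc X.chainInner (π c - z) (π c - z)
      = X.chainInner (c - z) (π c - z) - X.chainInner (c - π c) (π c - z) := by
        rw [← chainInner_sub_left, sub_sub_sub_cancel_left z (π c) c]
    _ = 0 := by rw [horth _ hcyc, hπ.2 c _ hcyc, sub_zero]

theorem map_add (hπ : X.IsOrthoProj π) (a b : ↥X.C1) : π (a + b) = π a + π b :=
  hπ.eq_of_isCycle_of_orthogonal (X.Z1.add_mem (hπ.1 a) (hπ.1 b)) fun w hw => by
    rw [add_sub_add_comm a b (π a) (π b), chainInner_add_left, hπ.2 a w hw, hπ.2 b w hw,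
      add_zero]

theorem map_pushChain (hπ : X.IsOrthoProj π) (f : X.Aut) (c : ↥X.C1) :
    π (X.pushChain f c) = X.pushChain f (π c) :=
  hπ.eq_of_isCycle_of_orthogonal ((hπ.1 c).pushChain f) fun w hw => by
    rw [← pushChain_sub, ← pushChain_pushChain_inv f w, chainInner_pushChain]
    exact hπ.2 c _ (hw.pushChain f⁻¹)

end IsOrthoProj

end SGraph

theorem embedding_equivariant_general (X : SGraph)
    (π : ↥X.C1 → ↥X.C1) (hπ : X.IsOrthoProj π)
    (f : X.Aut) (β : List X.E)
    (α : List X.E) (e : X.E)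
    (t : ℝ) :
    π (X.pathChain β) + X.pushChain f (π (X.pathChain α + t • X.edgeChain e)) =
      π (X.pathChain (β ++ α.map f.toHom.eMap) + t • X.edgeChain (f.toHom.eMap e)) := by
  rw [← hπ.map_pushChain, ← hπ.map_add, SGraph.pushChain_add, SGraph.pushChain_smul,
    SGraph.pushChain_pathChain, SGraph.pushChain_edgeChain, SGraph.pathChain_append, add_assoc]

/-- equivariance of the embedding of the maximal abelian cover.
Let `g ∈ Cov(X)` correspond to the pair `(f, ⟦β⟧)`, and define
`ρ(g)(c) = π(c_β) + f_*(c)`.  Then for every path `α : x₀ → x`, every edge `e` with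
`s(e) = x` and every `t ∈ [0,1]` we have
`ρ(g)(π(c_α + t·e)) = π(c_{β f(α)} + t·f(e))`. -/
theorem embedding_equivariant (X : SGraph) (hconn : X.Connected) (x₀ : X.V)
    (π : ↥X.C1 → ↥X.C1) (hπ : X.IsOrthoProj π)
    (g : ↥(X.Cov x₀)) (f : X.Aut) (β : List X.E) (hg : X.ActsAs x₀ g.1 f β)
    (x : X.V) (α : List X.E) (hα : X.IsPath x₀ x α) (e : X.E) (he : X.s e = x)
    (t : ℝ) (ht : t ∈ Set.Icc (0:ℝ) 1) :
    π (X.pathChain β) + X.pushChain f (π (X.pathChain α + t • X.edgeChain e)) =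
      π (X.pathChain (β ++ α.map f.toHom.eMap) + t • X.edgeChain (f.toHom.eMap e)) :=
  embedding_equivariant_general X π hπ f β α e t
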